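/- Let c be a Coxeter element of W with s initial in c, and let ω_c be the skew-symmetric form ω_c(β,β') = E_c(β,β') − E_c(β',β). Then for every reflection t of W, ω_c(α_s, β_t) ≥ 0, with equality only if s and t commute. -/

import Mathlib

/-- A geometric (reflection) representation of the Coxeter system `cs`, arising from a
symmetrizable generalized Cartan matrix `a` with symmetrizing function `δ`.  The field `α`
records the simple roots (a basis of `V`), `ρ` is the reflection representation, and `β`
assigns to each reflection `t = w sᵢ w⁻¹` its positive root (the member of `±(w · αᵢ)` lying
in the nonnegative span of the simple roots). -/
structure CoxeterGeomRep {B W : Type*} [Group W] (M : CoxeterMatrix B)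
    (cs : CoxeterSystem M W) (V : Type*) [AddCommGroup V] [Module ℝ V] where
  /-- the generalized Cartan matrix -/
  a : B → B → ℝ
  /-- the symmetrizing function -/
  δ : B → ℝ
  δ_pos : ∀ i, 0 < δ i
  symmetrize : ∀ i j, δ i * a i j = δ j * a j i
  δ_conj : ∀ i j, IsConj (cs.simple i) (cs.simple j) → δ i = δ j
  a_diag : ∀ i, a i i = 2
  a_offdiag : ∀ i j, i ≠ j → a i j ≤ 0
  a_fin : ∀ i j, i ≠ j → M i j ≠ 0 →
    a i j * a j i = 4 * Real.cos (Real.pi / (M i j : ℝ)) ^ 2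
  a_inf : ∀ i j, M i j = 0 → 4 ≤ a i j * a j i
  a_zero : ∀ i j, a i j = 0 ↔ a j i = 0
  /-- the simple roots, a basis of `V` -/
  α : Module.Basis B ℝ V
  /-- the reflection representation of `W` on `V` -/
  ρ : W →* (V ≃ₗ[ℝ] V)
  act : ∀ i j, ρ (cs.simple i) (α j) = α j - a i j • α i
  /-- the positive root associated to each reflection -/
  β : W → V
  β_root : ∀ (w : W) (i : B),
    β (w * cs.simple i * w⁻¹) = ρ w (α i) ∨ β (w * cs.simple i * w⁻¹) = -(ρ w (α i))
  β_pos : ∀ t, cs.IsReflection t →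
    ∃ c : B →₀ ℝ, (∀ i, 0 ≤ c i) ∧ β t = c.sum fun i r => r • α i

/-- `v` lies in the nonnegative linear span (the cone generated by) the set `X`. -/
def InCone {V : Type*} [AddCommGroup V] [Module ℝ V] (X : Set V) (v : V) : Prop :=
  ∃ (n : ℕ) (x : Fin n → V) (c : Fin n → ℝ),
    (∀ k, x k ∈ X) ∧ (∀ k, 0 ≤ c k) ∧ v = ∑ k, c k • x k

/-- `R` is the set of canonical generators of the reflection subgroup `W'`:  every positive
root of a reflection of `W'` lies in the nonnegative span of `{β_r : r ∈ R}`, and no `β_r`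
lies in the nonnegative span of the positive roots of the other reflections of `W'`. -/
def IsCanonicalGenerators {B W V : Type*} [Group W] [AddCommGroup V] [Module ℝ V]
    {M : CoxeterMatrix B} (cs : CoxeterSystem M W) (g : CoxeterGeomRep M cs V)
    (W' : Subgroup W) (R : Set W) : Prop :=
  R ⊆ {t | t ∈ W' ∧ cs.IsReflection t} ∧
  (∀ t ∈ W', cs.IsReflection t → InCone (g.β '' R) (g.β t)) ∧
  ∀ r ∈ R, ¬ InCone (g.β '' ({t | t ∈ W' ∧ cs.IsReflection t} \ {r})) (g.β r)
/-- `F` is the Euler form `E_c` for the Coxeter element `c` given by the reduced word `l`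
(an enumeration of the simple generators):  on simple coroots and simple roots it is given
by `E_c(α^∨_{s_i}, α_{s_j}) = a_{s_i s_j}` if `i > j`, `1` if `i = j`, `0` if `i < j`. -/
def IsEulerForm {B W V : Type*} [Group W] [AddCommGroup V] [Module ℝ V]
    {M : CoxeterMatrix B} (cs : CoxeterSystem M W) (g : CoxeterGeomRep M cs V)
    (l : List B) (F : V →ₗ[ℝ] V →ₗ[ℝ] ℝ) : Prop :=
  ∀ i j : Fin l.length,
    F ((g.δ (l.get i))⁻¹ • g.α (l.get i)) (g.α (l.get j)) =
      if (j : ℕ) < (i : ℕ) then g.a (l.get i) (l.get j)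
      else if (i : ℕ) = (j : ℕ) then 1 else 0

/-!
Since `s` comes first in `c`, `E_c(α_s, α_b) = 0` and `E_c(α_b, α_s) = δ_b a_bs` for `b ≠ s`, so
`ω_c(α_s, β) = δ_s (2 β_s - α_s^∨(β)) = -δ_s ∑_{b ≠ s} a_sb β_b`, which is nonnegative for a
positive root `β`. If it vanishes for `β = β_t`, then `s β_t = β_t - 2 (β_t)_s α_s`; as `±s β_t` is
the positive root of `s t s`, this forces `β_{sts} = β_t`. A reflection is determined by its root
because the reflection representation is faithful, which rests on the classical fact that
`w α_i` is a nonnegative combination of simple roots whenever `ℓ(w s_i) > ℓ(w)` (proved by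
induction on `ℓ(w)`, the rank-two case being an explicit computation in the dihedral group).
Hence `s t s = t`.
-/

open CoxeterSystem Real

/-- The coefficients of `α_i` and `α_j` in `ρ(⋯ s_i s_j) α_i` (a word of `k` alternating letters
ending in `s_j`), for `p = -a_ij` and `q = -a_ji`. -/
def dihedralCoeff (p q : ℝ) : ℕ → ℝ × ℝ
  | 0 => (1, 0)
  | k + 1 =>
    let x := dihedralCoeff p q k
    if Even k then (x.1, q * x.1 - x.2) else (p * x.2 - x.1, x.2)

section dihedralCoeff

variable {p q : ℝ} {k : ℕ}

theorem dihedralCoeff_succ_of_even (hk : Even k) :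
    dihedralCoeff p q (k + 1) =
      ((dihedralCoeff p q k).1, q * (dihedralCoeff p q k).1 - (dihedralCoeff p q k).2) := by
  simp [dihedralCoeff, hk]

theorem dihedralCoeff_succ_of_not_even (hk : ¬Even k) :
    dihedralCoeff p q (k + 1) =
      (p * (dihedralCoeff p q k).2 - (dihedralCoeff p q k).1, (dihedralCoeff p q k).2) := by
  simp [dihedralCoeff, hk]

theorem dihedralCoeff_nonneg_of_four_le (hp : 0 ≤ p) (hq : 0 ≤ q) (hpq : 4 ≤ p * q) (k : ℕ) :
    0 ≤ (dihedralCoeff p q k).1 ∧ 0 ≤ (dihedralCoeff p q k).2 := by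
  suffices h : 0 ≤ (dihedralCoeff p q k).1 ∧ 0 ≤ (dihedralCoeff p q k).2 ∧
      if Even k then 2 * (dihedralCoeff p q k).2 ≤ q * (dihedralCoeff p q k).1
      else 2 * (dihedralCoeff p q k).1 ≤ p * (dihedralCoeff p q k).2 from ⟨h.1, h.2.1⟩
  induction k with
  | zero => simp [dihedralCoeff, hq]
  | succ k ih =>
    obtain ⟨hx, hy, hxy⟩ := ih
    by_cases hk : Even k
    · have hk' : ¬Even (k + 1) := by simpa [Nat.even_add_one] using hk
      rw [dihedralCoeff_succ_of_even hk, if_neg hk']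
      rw [if_pos hk] at hxy
      exact ⟨hx, by nlinarith, by nlinarith⟩
    · have hk' : Even (k + 1) := by simpa [Nat.even_add_one] using hk
      rw [dihedralCoeff_succ_of_not_even hk, if_pos hk']
      rw [if_neg hk] at hxy
      exact ⟨by nlinarith, hy, by nlinarith⟩

theorem dihedralCoeff_eq_sin {θ : ℝ} (hpq : p * q = 4 * cos θ ^ 2) (hs : sin θ ≠ 0)
    (hc : cos θ ≠ 0) (n : ℕ) :
    dihedralCoeff p q (2 * n) = (sin ((2 * n + 1) * θ) / sin θ, q * sin (2 * n * θ) / sin (2 * θ)) ∧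
    dihedralCoeff p q (2 * n + 1) =
      (sin ((2 * n + 1) * θ) / sin θ, q * sin ((2 * n + 2) * θ) / sin (2 * θ)) := by
  have hs2 : sin (2 * θ) = 2 * sin θ * cos θ := sin_two_mul θ
  have hrec : ∀ A, sin (A + θ) = 2 * cos θ * sin A - sin (A - θ) := fun A => by
    rw [sin_add, sin_sub]; ring
  induction n with
  | zero =>
    rw [dihedralCoeff_succ_of_even (by simp)]
    have h0 : dihedralCoeff p q (2 * 0) = (1, 0) := rfl
    simp only [h0, Nat.cast_zero]
    constructor <;> ext <;> simp [hs2] <;> field_simp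
  | succ n ih =>
    obtain ⟨-, ih⟩ := ih
    have hstep : dihedralCoeff p q (2 * (n + 1)) =
        (sin ((2 * ↑(n + 1) + 1) * θ) / sin θ, q * sin (2 * ↑(n + 1) * θ) / sin (2 * θ)) := by
      rw [show 2 * (n + 1) = 2 * n + 1 + 1 by ring,
        dihedralCoeff_succ_of_not_even (by simp), ih]
      ext
      · rw [show (2 * ((n + 1 : ℕ) : ℝ) + 1) * θ = (2 * n + 2) * θ + θ by push_cast; ring,
          hrec, show (2 * n + 2) * θ - θ = (2 * n + 1) * θ by ring, hs2]
        field_simp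
        linear_combination sin (2 * ((n : ℝ) + 1) * θ) * hpq
      · push_cast; ring_nf
    refine ⟨hstep, ?_⟩
    rw [dihedralCoeff_succ_of_even (even_two_mul _), hstep]
    ext
    · rfl
    · rw [show (2 * ((n + 1 : ℕ) : ℝ) + 2) * θ = (2 * ↑(n + 1) + 1) * θ + θ by ring, hrec,
        show (2 * ((n + 1 : ℕ) : ℝ) + 1) * θ - θ = 2 * ↑(n + 1) * θ by ring, hs2]
      field_simp

theorem dihedralCoeff_nonneg_of_lt (hq : 0 ≤ q) {m : ℕ}
    (hpq : p * q = 4 * cos (π / m) ^ 2) (hk : k < m) :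
    0 ≤ (dihedralCoeff p q k).1 ∧ 0 ≤ (dihedralCoeff p q k).2 := by
  obtain hk1 | hk2 := le_or_gt k 1
  · interval_cases k <;> simp [dihedralCoeff, hq]
  have hm : (3 : ℝ) ≤ m := by exact_mod_cast (show 3 ≤ m by omega)
  set θ := π / m
  have hθ : 0 < θ := by positivity
  have hmθ : m * θ = π := by simp only [θ]; field_simp
  have hsin : ∀ r : ℕ, r ≤ m → 0 ≤ sin (r * θ) := fun r hr =>
    sin_nonneg_of_nonneg_of_le_pi (by positivity) (by rw [← hmθ]; gcongr)
  have hs : 0 < sin θ := sin_pos_of_pos_of_lt_pi hθ (by nlinarith [pi_pos])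
  have hs2 : 0 < sin (2 * θ) := sin_pos_of_pos_of_lt_pi (by positivity) (by nlinarith [pi_pos])
  have hc : 0 < cos θ := cos_pos_of_mem_Ioo ⟨by linarith [pi_pos], by nlinarith [pi_pos]⟩
  have hcoeff := dihedralCoeff_eq_sin hpq hs.ne' hc.ne'
  obtain ⟨n, rfl | rfl⟩ := Nat.even_or_odd' k
  · rw [(hcoeff n).1]
    exact ⟨div_nonneg (by exact_mod_cast hsin (2 * n + 1) (by omega)) hs.le,
      div_nonneg (mul_nonneg hq (by exact_mod_cast hsin (2 * n) (by omega))) hs2.le⟩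
  · rw [(hcoeff n).2]
    exact ⟨div_nonneg (by exact_mod_cast hsin (2 * n + 1) (by omega)) hs.le,
      div_nonneg (mul_nonneg hq (by exact_mod_cast hsin (2 * n + 2) (by omega))) hs2.le⟩

end dihedralCoeff

namespace CoxeterSystem

variable {B W : Type*} [Group W] {M : CoxeterMatrix B} (cs : CoxeterSystem M W)

theorem not_isRightDescent_of_length_mul_alternatingWord {u : W} {i j : B} {k : ℕ}
    (h : cs.length (u * cs.wordProd (alternatingWord i j (k + 1))) = cs.length u + (k + 1)) :
    ¬cs.IsRightDescent u (if Even k then j else i) := by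
  intro hd
  rw [alternatingWord_succ', cs.wordProd_cons, ← mul_assoc] at h
  have hle := cs.length_mul_le (u * cs.simple (if Even k then j else i))
    (cs.wordProd (alternatingWord i j k))
  have hword := cs.length_wordProd_le (alternatingWord i j k)
  rw [length_alternatingWord] at hword
  unfold IsRightDescent at hd
  omega

theorem exists_mul_alternatingWord_of_isRightDescent {w : W} {j : B} (i : B)
    (hj : cs.IsRightDescent w j) :
    ∃ u k, w = u * cs.wordProd (alternatingWord i j k) ∧ cs.length w = cs.length u + k ∧
      0 < k ∧ ¬cs.IsRightDescent u i ∧ ¬cs.IsRightDescent u j := by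
  classical
  let P k := ∃ u, w = u * cs.wordProd (alternatingWord i j k) ∧ cs.length w = cs.length u + k
  have hP1 : P 1 := ⟨w * cs.simple j, by simp [alternatingWord, mul_assoc],
    by have := cs.isRightDescent_iff.mp hj; omega⟩
  have hbound : ∀ k, P k → k ≤ cs.length w := by
    rintro k ⟨u, -, hu⟩; omega
  have hk : 1 ≤ Nat.findGreatest P (cs.length w) := Nat.le_findGreatest (hbound 1 hP1) hP1
  obtain ⟨u, hw, hlen⟩ := Nat.findGreatest_spec (hbound 1 hP1) hP1
  set k := Nat.findGreatest P (cs.length w)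
  have hnext : ¬cs.IsRightDescent u (if Even k then j else i) := by
    intro hd
    have hPk : P (k + 1) := by
      refine ⟨u * cs.simple (if Even k then j else i), ?_, ?_⟩
      · rw [alternatingWord_succ', cs.wordProd_cons, mul_assoc, cs.simple_mul_simple_cancel_left,
          hw]
      · have := cs.isRightDescent_iff.mp hd; omega
    have := Nat.le_findGreatest (hbound _ hPk) hPk
    omega
  obtain ⟨k', hk'⟩ : ∃ k', k = k' + 1 := ⟨k - 1, by omega⟩
  rw [hk'] at hw hlen hnext
  have hhead := cs.not_isRightDescent_of_length_mul_alternatingWord (k := k') (hw ▸ hlen)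
  refine ⟨u, k' + 1, hw, hlen, k'.succ_pos, ?_⟩
  by_cases he : Even k'
  · rw [if_neg (by simpa [Nat.even_add_one] using he)] at hnext
    rw [if_pos he] at hhead
    exact ⟨hnext, hhead⟩
  · rw [if_pos (by simpa [Nat.even_add_one] using he)] at hnext
    rw [if_neg he] at hhead
    exact ⟨hhead, hnext⟩

theorem eq_zero_or_lt_of_mul_alternatingWord {w u : W} {i j : B} {k : ℕ}
    (hw : w = u * cs.wordProd (alternatingWord i j k)) (hlen : cs.length w = cs.length u + k)
    (hi : ¬cs.IsRightDescent w i) : M i j = 0 ∨ k < M i j := by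
  have hwi : w * cs.simple i = u * cs.wordProd (alternatingWord j i (k + 1)) := by
    rw [alternatingWord_succ, cs.wordProd_concat, hw, mul_assoc]
  have hred : cs.IsReduced (alternatingWord j i (k + 1)) := by
    have h1 := cs.not_isRightDescent_iff.mp hi
    have h2 := cs.length_mul_le u (cs.wordProd (alternatingWord j i (k + 1)))
    have h3 := cs.length_wordProd_le (alternatingWord j i (k + 1))
    rw [← hwi] at h2
    rw [length_alternatingWord] at h3
    unfold IsReduced
    rw [length_alternatingWord]
    omega
  by_contra! h
  exact cs.not_isReduced_alternatingWord j i (by rw [M.symmetric]; exact h.1)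
    (by rw [M.symmetric]; omega) hred

end CoxeterSystem

theorem Module.Basis.eq_of_repr_nonneg_of_eq_sub {ι V : Type*} [AddCommGroup V] [Module ℝ V]
    (b : Module.Basis ι ℝ V) {v v' : V} (i : ι) (hv : ∀ k, 0 ≤ b.repr v k)
    (hv' : ∀ k, 0 ≤ b.repr v' k)
    (h : v' = v - (2 * b.repr v i) • b i ∨ v' = -(v - (2 * b.repr v i) • b i)) : v' = v := by
  classical
  rcases h with rfl | rfl
  · have hi := hv' i
    simp only [map_sub, map_smul, b.repr_self, Finsupp.sub_apply, Finsupp.smul_apply,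
      Finsupp.single_eq_same, smul_eq_mul, mul_one] at hi
    have hvi : b.repr v i = 0 := by linarith [hv i]
    rw [hvi, mul_zero, zero_smul, sub_zero]
  · refine b.repr.injective (Finsupp.ext fun k => ?_)
    have hk := hv' k
    simp only [map_neg, map_sub, map_smul, b.repr_self, Finsupp.neg_apply, Finsupp.sub_apply,
      Finsupp.smul_apply, smul_eq_mul, Finsupp.single_apply] at hk ⊢
    split_ifs at hk ⊢ with hik
    · subst hik; ring
    · linarith [hv k]

namespace CoxeterGeomRep

variable {B W V : Type*} [Group W] [AddCommGroup V] [Module ℝ V]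
  {M : CoxeterMatrix B} {cs : CoxeterSystem M W} (g : CoxeterGeomRep M cs V)

theorem rho_mul_apply (w₁ w₂ : W) (v : V) : g.ρ (w₁ * w₂) v = g.ρ w₁ (g.ρ w₂ v) := by
  rw [map_mul, LinearEquiv.mul_apply]

theorem rho_simple_apply_self (i : B) : g.ρ (cs.simple i) (g.α i) = -g.α i := by
  rw [g.act, g.a_diag]
  module

theorem rho_alternatingWord_apply (i j : B) (k : ℕ) :
    g.ρ (cs.wordProd (alternatingWord i j k)) (g.α i) =
      (dihedralCoeff (-g.a i j) (-g.a j i) k).1 • g.α i +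
        (dihedralCoeff (-g.a i j) (-g.a j i) k).2 • g.α j := by
  induction k with
  | zero => simp [alternatingWord, dihedralCoeff]
  | succ k ih =>
    rw [alternatingWord_succ', cs.wordProd_cons, rho_mul_apply, ih]
    by_cases hk : Even k
    · rw [if_pos hk, dihedralCoeff_succ_of_even hk, map_add, map_smul, map_smul, g.act, g.act,
        g.a_diag]
      module
    · rw [if_neg hk, dihedralCoeff_succ_of_not_even hk, map_add, map_smul, map_smul, g.act,
        g.act, g.a_diag]
      module

theorem dihedralCoeff_nonneg {i j : B} (hij : i ≠ j) {k : ℕ} (hk : M i j = 0 ∨ k < M i j) :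
    0 ≤ (dihedralCoeff (-g.a i j) (-g.a j i) k).1 ∧
      0 ≤ (dihedralCoeff (-g.a i j) (-g.a j i) k).2 := by
  have hp : 0 ≤ -g.a i j := neg_nonneg.2 (g.a_offdiag i j hij)
  have hq : 0 ≤ -g.a j i := neg_nonneg.2 (g.a_offdiag j i hij.symm)
  rcases hk with hM | hk
  · exact dihedralCoeff_nonneg_of_four_le hp hq (by rw [neg_mul_neg]; exact g.a_inf i j hM) k
  · refine dihedralCoeff_nonneg_of_lt hq ?_ hk
    rw [neg_mul_neg]
    exact g.a_fin i j hij (by omega)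

theorem repr_rho_apply_nonneg_of_not_isRightDescent {w : W} {i : B}
    (hi : ¬cs.IsRightDescent w i) (b : B) : 0 ≤ g.α.repr (g.ρ w (g.α i)) b := by
  induction hn : cs.length w using Nat.strong_induction_on generalizing w i with
  | _ n ih =>
  obtain rfl | hw1 := eq_or_ne w 1
  · rw [map_one, LinearEquiv.coe_one, id, g.α.repr_self]
    exact Finsupp.single_nonneg.2 zero_le_one b
  obtain ⟨j, hj⟩ := cs.exists_rightDescent_of_ne_one hw1
  have hij : i ≠ j := by rintro rfl; exact hi hj
  obtain ⟨u, k, rfl, hlen, hk, hui, huj⟩ := cs.exists_mul_alternatingWord_of_isRightDescent i hj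
  obtain ⟨hx, hy⟩ :=
    g.dihedralCoeff_nonneg hij (cs.eq_zero_or_lt_of_mul_alternatingWord rfl hlen hi)
  rw [rho_mul_apply, rho_alternatingWord_apply, map_add, map_smul, map_smul, map_add, map_smul,
    map_smul, Finsupp.add_apply, Finsupp.smul_apply, Finsupp.smul_apply, smul_eq_mul, smul_eq_mul]
  exact add_nonneg (mul_nonneg hx (ih _ (by omega) hui rfl))
    (mul_nonneg hy (ih _ (by omega) huj rfl))

noncomputable def coroot (i : B) : V →ₗ[ℝ] ℝ := g.α.constr ℝ (g.a i)

theorem coroot_apply_basis (i j : B) : g.coroot i (g.α j) = g.a i j :=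
  g.α.constr_basis ℝ _ j

theorem rho_simple_apply (i : B) (v : V) : g.ρ (cs.simple i) v = v - g.coroot i v • g.α i := by
  have h : (g.ρ (cs.simple i) : V →ₗ[ℝ] V) =
      LinearMap.id - LinearMap.toSpanSingleton ℝ V (g.α i) ∘ₗ g.coroot i :=
    g.α.ext fun j => by simp [g.act, coroot_apply_basis]
  simpa using LinearMap.congr_fun h v

theorem coroot_apply_le_of_repr_nonneg {v : V} (hv : ∀ b, 0 ≤ g.α.repr v b) (i : B) :
    g.coroot i v ≤ 2 * g.α.repr v i := by
  classical
  calc g.coroot i v = ∑ b ∈ (g.α.repr v).support, g.α.repr v b * g.a i b := by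
        rw [coroot, Module.Basis.constr_apply]; rfl
    _ ≤ ∑ b ∈ (g.α.repr v).support, if b = i then g.α.repr v b * 2 else 0 := by
        refine Finset.sum_le_sum fun b _ => ?_
        split_ifs with hb
        · rw [hb, g.a_diag]
        · exact mul_nonpos_of_nonneg_of_nonpos (hv b) (g.a_offdiag i b (Ne.symm hb))
    _ = 2 * g.α.repr v i := by
        rw [Finset.sum_ite_eq']
        split_ifs with hi
        · ring
        · rw [Finsupp.notMem_support_iff.1 hi, mul_zero]

noncomputable def bilinForm : V →ₗ[ℝ] V →ₗ[ℝ] ℝ := g.α.constr ℝ fun i => g.δ i • g.coroot i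

theorem bilinForm_apply_basis_left (i : B) (v : V) :
    g.bilinForm (g.α i) v = g.δ i * g.coroot i v := by
  simp [bilinForm]

theorem bilinForm_comm (u v : V) : g.bilinForm u v = g.bilinForm v u := by
  refine LinearMap.congr_fun₂ (f := g.bilinForm) (g := g.bilinForm.flip)
    (LinearMap.ext_basis g.α g.α fun i j => ?_) u v
  simp only [LinearMap.flip_apply, bilinForm_apply_basis_left, coroot_apply_basis]
  exact g.symmetrize i j

theorem bilinForm_rho_simple (i : B) (u v : V) :
    g.bilinForm (g.ρ (cs.simple i) u) (g.ρ (cs.simple i) v) = g.bilinForm u v := by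
  have hu : g.bilinForm u (g.α i) = g.δ i * g.coroot i u := by
    rw [bilinForm_comm, bilinForm_apply_basis_left]
  simp only [rho_simple_apply, map_sub, map_smul, LinearMap.sub_apply, LinearMap.smul_apply,
    smul_eq_mul, bilinForm_apply_basis_left, coroot_apply_basis, g.a_diag, hu]
  ring

theorem bilinForm_rho (w : W) (u v : V) :
    g.bilinForm (g.ρ w u) (g.ρ w v) = g.bilinForm u v := by
  obtain ⟨ω, rfl⟩ := cs.wordProd_surjective w
  induction ω generalizing u v with
  | nil => simp
  | cons i ω ih => rw [cs.wordProd_cons, rho_mul_apply, rho_mul_apply, bilinForm_rho_simple, ih]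

theorem rho_apply_rho_inv_apply (w : W) (v : V) : g.ρ w (g.ρ w⁻¹ v) = v := by
  rw [← rho_mul_apply, mul_inv_cancel, map_one, LinearEquiv.coe_one, id]

theorem rho_reflection_apply {t : W} (ht : cs.IsReflection t) (v : V) :
    g.ρ t v = v - (2 * g.bilinForm (g.β t) v / g.bilinForm (g.β t) (g.β t)) • g.β t := by
  obtain ⟨w, i, rfl⟩ := ht
  have hrr : g.bilinForm (g.ρ w (g.α i)) (g.ρ w (g.α i)) = 2 * g.δ i := by
    rw [bilinForm_rho, bilinForm_apply_basis_left, coroot_apply_basis, g.a_diag]; ring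
  have hrv : g.bilinForm (g.ρ w (g.α i)) v = g.δ i * g.coroot i (g.ρ w⁻¹ v) := by
    rw [← bilinForm_apply_basis_left, ← g.bilinForm_rho w (g.α i) (g.ρ w⁻¹ v),
      rho_apply_rho_inv_apply]
  have key : g.ρ (w * cs.simple i * w⁻¹) v = v - (2 * g.bilinForm (g.ρ w (g.α i)) v /
      g.bilinForm (g.ρ w (g.α i)) (g.ρ w (g.α i))) • g.ρ w (g.α i) := by
    rw [rho_mul_apply, rho_mul_apply, rho_simple_apply, map_sub, map_smul,
      rho_apply_rho_inv_apply, hrr, hrv]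
    field_simp [(g.δ_pos i).ne']
  rcases g.β_root w i with h | h <;> rw [h, key]
  simp [neg_div]

theorem rho_injective : Function.Injective g.ρ := by
  refine (injective_iff_map_eq_one g.ρ).2 fun u hu => ?_
  by_contra hu1
  obtain ⟨j, hj⟩ := cs.exists_rightDescent_of_ne_one hu1
  have h := g.repr_rho_apply_nonneg_of_not_isRightDescent
    (cs.isRightDescent_iff_not_isRightDescent_mul.1 hj) j
  rw [rho_mul_apply, rho_simple_apply_self, hu, LinearEquiv.coe_one, id, map_neg,
    g.α.repr_self] at h
  norm_num at h

theorem beta_injOn : Set.InjOn g.β {t | cs.IsReflection t} := fun t₁ h₁ t₂ h₂ h =>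
  g.rho_injective (LinearEquiv.ext fun v => by
    rw [g.rho_reflection_apply h₁, g.rho_reflection_apply h₂, h])

theorem repr_beta_nonneg {t : W} (ht : cs.IsReflection t) (b : B) :
    0 ≤ g.α.repr (g.β t) b := by
  obtain ⟨c, hc, hsum⟩ := g.β_pos t ht
  rw [hsum, ← Finsupp.linearCombination_apply, g.α.repr_linearCombination]
  exact hc b

theorem beta_conj {t : W} (ht : cs.IsReflection t) (w : W) :
    g.β (w * t * w⁻¹) = g.ρ w (g.β t) ∨ g.β (w * t * w⁻¹) = -g.ρ w (g.β t) := by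
  obtain ⟨x, i, rfl⟩ := ht
  have e : w * (x * cs.simple i * x⁻¹) * w⁻¹ = w * x * cs.simple i * (w * x)⁻¹ := by group
  rw [e]
  rcases g.β_root (w * x) i with h | h <;> rcases g.β_root x i with h' | h' <;>
    rw [h, h', rho_mul_apply] <;> simp

theorem commute_simple_of_coroot_apply_beta_eq {t : W} (ht : cs.IsReflection t) {i : B}
    (h : g.coroot i (g.β t) = 2 * g.α.repr (g.β t) i) : Commute (cs.simple i) t := by
  have hconj : g.β (cs.simple i * t * (cs.simple i)⁻¹) = g.β t := by
    refine g.α.eq_of_repr_nonneg_of_eq_sub i (g.repr_beta_nonneg ht)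
      (g.repr_beta_nonneg (ht.conj _)) ?_
    rw [← h, ← rho_simple_apply]
    exact g.beta_conj ht _
  exact mul_inv_eq_iff_eq_mul.1 (g.beta_injOn (ht.conj _) ht hconj)

end CoxeterGeomRep

namespace IsEulerForm

variable {B W V : Type*} [Group W] [AddCommGroup V] [Module ℝ V]
  {M : CoxeterMatrix B} {cs : CoxeterSystem M W} {g : CoxeterGeomRep M cs V}
  {F : V →ₗ[ℝ] V →ₗ[ℝ] ℝ}

theorem apply_get {l : List B} (hF : IsEulerForm cs g l F) (i j : Fin l.length) :
    F (g.α (l.get i)) (g.α (l.get j)) = g.δ (l.get i) *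
      if (j : ℕ) < i then g.a (l.get i) (l.get j) else if (i : ℕ) = j then 1 else 0 := by
  have h := hF i j
  rwa [map_smul, LinearMap.smul_apply, smul_eq_mul, inv_mul_eq_iff_eq_mul₀ (g.δ_pos _).ne'] at h

variable {s : B} {l₀ : List B}

theorem apply_head_head (hF : IsEulerForm cs g (s :: l₀) F) : F (g.α s) (g.α s) = g.δ s := by
  simpa using hF.apply_get ⟨0, by simp⟩ ⟨0, by simp⟩

theorem apply_head_of_ne (hF : IsEulerForm cs g (s :: l₀) F) {b : B} (hb : b ∈ s :: l₀)
    (hbs : b ≠ s) : F (g.α s) (g.α b) = 0 ∧ F (g.α b) (g.α s) = g.δ b * g.a b s := by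
  obtain ⟨⟨_ | n, hn⟩, rfl⟩ := List.mem_iff_get.1 hb
  · exact absurd rfl hbs
  · exact ⟨by simpa using hF.apply_get ⟨0, by simp⟩ ⟨n + 1, hn⟩,
      by simpa using hF.apply_get ⟨n + 1, hn⟩ ⟨0, by simp⟩⟩

theorem sub_flip_head_apply (hF : IsEulerForm cs g (s :: l₀) F) (hall : ∀ b, b ∈ s :: l₀)
    (v : V) : F (g.α s) v - F v (g.α s) = g.δ s * (2 * g.α.repr v s - g.coroot s v) := by
  have h : F (g.α s) - F.flip (g.α s) = g.δ s • (2 • g.α.coord s - g.coroot s) := by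
    refine g.α.ext fun b => ?_
    simp only [LinearMap.sub_apply, LinearMap.flip_apply, LinearMap.smul_apply,
      Module.Basis.coord_apply, g.α.repr_self, g.coroot_apply_basis, smul_eq_mul]
    by_cases hbs : b = s
    · subst hbs
      simp [hF.apply_head_head, g.a_diag]
    · obtain ⟨h₁, h₂⟩ := hF.apply_head_of_ne (hall b) hbs
      rw [h₁, h₂, Finsupp.single_eq_of_ne' hbs, g.symmetrize]
      ring
  simpa using LinearMap.congr_fun h v

end IsEulerForm

theorem omega_nonneg_of_initial_general
    {B W V : Type*} [Group W] [AddCommGroup V] [Module ℝ V]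
    {M : CoxeterMatrix B} (cs : CoxeterSystem M W) (g : CoxeterGeomRep M cs V)
    (s : B) (l₀ : List B) (hall : ∀ b : B, b ∈ s :: l₀)
    (F : V →ₗ[ℝ] V →ₗ[ℝ] ℝ) (hF : IsEulerForm cs g (s :: l₀) F)
    (t : W) (ht : cs.IsReflection t) :
    0 ≤ F (g.α s) (g.β t) - F (g.β t) (g.α s) ∧
    (F (g.α s) (g.β t) - F (g.β t) (g.α s) = 0 → Commute (cs.simple s) t) := by
  have hle := g.coroot_apply_le_of_repr_nonneg (g.repr_beta_nonneg ht) s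
  rw [hF.sub_flip_head_apply hall]
  refine ⟨mul_nonneg (g.δ_pos s).le (by linarith),
    fun h0 => g.commute_simple_of_coroot_apply_beta_eq ht ?_⟩
  linarith [(mul_eq_zero.1 h0).resolve_left (g.δ_pos s).ne']

/-- Let `c` be the Coxeter element with reduced word `s :: l₀` (so that
`s` is initial in `c`), let `E_c` be the Euler form, and let
`ω_c(β, β') = E_c(β, β') - E_c(β', β)` be its antisymmetrization.  Then for every
reflection `t` of `W` we have `ω_c(α_s, β_t) ≥ 0`, with equality only if `s` and `t`
commute. -/
theorem omega_nonneg_of_initial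
    {B W V : Type*} [Group W] [AddCommGroup V] [Module ℝ V]
    {M : CoxeterMatrix B} (cs : CoxeterSystem M W) (g : CoxeterGeomRep M cs V)
    (s : B) (l₀ : List B) (hnd : (s :: l₀).Nodup) (hall : ∀ b : B, b ∈ s :: l₀)
    (F : V →ₗ[ℝ] V →ₗ[ℝ] ℝ) (hF : IsEulerForm cs g (s :: l₀) F)
    (t : W) (ht : cs.IsReflection t) :
    0 ≤ F (g.α s) (g.β t) - F (g.β t) (g.α s) ∧
    (F (g.α s) (g.β t) - F (g.β t) (g.α s) = 0 → Commute (cs.simple s) t) :=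
  omega_nonneg_of_initial_general cs g s l₀ hall F hF t ht
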